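/- arXiv:2601.07472 — 2 statements merged into one kernel-verified Lean document; each statement's English description precedes it below -/
import Mathlib

section
/- The d-tilted information of a Gaussian source S ~ N(0, σ_s²) at distortion level d equals R(d) − 1/2 + S²/(2σ_s²), where R(d) = (1/2)·ln(σ_s²/d), js(S,d) = −ln E_{Ŝ*}[exp(λ*d − λ*(S−Ŝ*)²)], λ* = 1/(2d), and Ŝ* ~ N(0, σ_s²−d). -/
open MeasureTheory ProbabilityTheory Real
open scoped NNReal ENNReal

/-- The `d`-tilted information of a Gaussian source `S ~ N(0, σs²)` at distortion `d`
equals `R(d) − 1/2 + S²/(2σs²)`, where `R(d) = (1/2)·ln(σs²/d)`, `λ* = 1/(2d)`, and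
`Ŝ* ~ N(0, σs² − d)`. -/
theorem stmt_2 (σs d S : ℝ) (hσ : 0 < σs) (hd : 0 < d) (hdσ : d < σs ^ 2) :
    -Real.log (∫ x, Real.exp ((1 / (2 * d)) * d - (1 / (2 * d)) * (S - x) ^ 2)
        ∂(gaussianReal 0 (σs ^ 2 - d).toNNReal))
      = (1 / 2) * Real.log (σs ^ 2 / d) - 1 / 2 + S ^ 2 / (2 * σs ^ 2) := by
  set v : ℝ := σs ^ 2 - d with hvdef
  have hv : 0 < v := by simp [hvdef]; linarith
  have hσ2 : 0 < σs ^ 2 := by positivity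
  have hVc : ((v.toNNReal : ℝ≥0) : ℝ) = v := Real.coe_toNNReal v hv.le
  have hVne : v.toNNReal ≠ 0 := by
    simp [Real.toNNReal_eq_zero, not_le, hv]
  -- constants
  set A : ℝ := σs ^ 2 / (2 * d * v) with hA
  have hApos : 0 < A := by positivity
  set c : ℝ := S * v / σs ^ 2 with hc
  -- Step 1: gaussianReal integral to volume integral
  have step1 : (∫ x, Real.exp ((1 / (2 * d)) * d - (1 / (2 * d)) * (S - x) ^ 2)
        ∂(gaussianReal 0 v.toNNReal))
      = ∫ x, gaussianPDFReal 0 v.toNNReal x *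
          Real.exp ((1 / (2 * d)) * d - (1 / (2 * d)) * (S - x) ^ 2) := by
    rw [gaussianReal_of_var_ne_zero _ hVne]
    have hmeas : Measurable (fun x => (gaussianPDFReal 0 v.toNNReal x).toNNReal) :=
      (measurable_gaussianPDFReal 0 v.toNNReal).real_toNNReal
    rw [show gaussianPDF 0 v.toNNReal
        = fun x => ((gaussianPDFReal 0 v.toNNReal x).toNNReal : ℝ≥0∞) from rfl]
    rw [integral_withDensity_eq_integral_smul hmeas]
    congr 1
    ext x
    rw [NNReal.smul_def, smul_eq_mul, Real.coe_toNNReal _ (gaussianPDFReal_nonneg _ _ _)]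
  -- Step 2: pointwise rewrite of the integrand (completing the square)
  have step2 : ∀ x : ℝ, gaussianPDFReal 0 v.toNNReal x *
        Real.exp ((1 / (2 * d)) * d - (1 / (2 * d)) * (S - x) ^ 2)
      = ((√(2 * π * v))⁻¹ * Real.exp (1 / 2 - S ^ 2 / (2 * σs ^ 2))) *
          Real.exp (-A * (x - c) ^ 2) := by
    intro x
    rw [gaussianPDFReal, hVc, mul_assoc (√(2 * π * v))⁻¹, ← Real.exp_add,
      mul_assoc (√(2 * π * v))⁻¹, ← Real.exp_add]
    congr 2
    rw [hA, hc, hvdef]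
    field_simp [(sub_pos.mpr hdσ).ne']
    ring
  simp_rw [step1, step2]
  rw [integral_const_mul, integral_sub_right_eq_self (fun x => Real.exp (-A * x ^ 2)) c,
    integral_gaussian]
  -- now pure computation
  have hsqrtA : √(π / A) = √(2 * π * v) * √(d / σs ^ 2) := by
    rw [← Real.sqrt_mul (by positivity)]
    congr 1
    rw [hA]
    field_simp
  rw [hsqrtA]
  have hs2 : (0:ℝ) < √(2 * π * v) := Real.sqrt_pos.mpr (by positivity)
  rw [show (√(2 * π * v))⁻¹ * Real.exp (1 / 2 - S ^ 2 / (2 * σs ^ 2)) *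
      (√(2 * π * v) * √(d / σs ^ 2))
      = Real.exp (1 / 2 - S ^ 2 / (2 * σs ^ 2)) * √(d / σs ^ 2) by
    field_simp]
  rw [Real.log_mul (Real.exp_ne_zero _) (by positivity), Real.log_exp,
    Real.log_sqrt (by positivity), Real.log_div (ne_of_gt hd) (ne_of_gt hσ2),
    Real.log_div (ne_of_gt hσ2) (ne_of_gt hd)]
  ring
end

section
/- In the SK iteration with error variance recursion α_i = σ_s²·(σ_η²/(P+σ_η²))^i, the excess-distortion probability at step N satisfies P(ε_N² ≥ d) ≤ 2·Q(exp(−R(d) + N·C(P))), where R(d) = (1/2)ln(σ_s²/d), C(P) = (1/2)ln(1+P/σ_η²), and ε_N ~ N(0, α_N). -/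
/-!
`ε_N² ≥ d` means `|ε_N| ≥ √d`. By symmetry of the centered Gaussian the two tails are equal,
and rescaling by `√α_N` turns each into the standard tail `Q(√(d / α_N))`, so the bound holds with
equality. It remains to note that `√(d / α_N) = exp(-R(d) + N·C(P))`, since
`log (σ_η² / (P + σ_η²)) = -2·C(P)`.
-/

open MeasureTheory ProbabilityTheory Real
open scoped NNReal

theorem setOf_sq_le_sq_eq_Iic_union_Ici {a : ℝ} (ha : 0 ≤ a) :
    {x : ℝ | a ^ 2 ≤ x ^ 2} = Set.Iic (-a) ∪ Set.Ici a := by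
  ext x
  simp only [Set.mem_ofPred_eq, Set.mem_union, Set.mem_Iic, Set.mem_Ici, sq_le_sq,
    abs_of_nonneg ha, le_abs']

theorem gaussianReal_zero_Iic_neg (v : ℝ≥0) (a : ℝ) :
    gaussianReal 0 v (Set.Iic (-a)) = gaussianReal 0 v (Set.Ici a) := by
  conv_lhs => rw [← neg_zero, ← gaussianReal_map_neg,
    Measure.map_apply measurable_neg measurableSet_Iic]
  simp

theorem gaussianReal_zero_Ici_eq_std {v : ℝ≥0} (hv : v ≠ 0) (a : ℝ) :
    gaussianReal 0 v (Set.Ici a) = gaussianReal 0 1 (Set.Ici (a / √v)) := by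
  have hsqrt : 0 < √(v : ℝ) := Real.sqrt_pos.2 (by positivity)
  have hmap : (gaussianReal 0 1).map (√(v : ℝ) * ·) = gaussianReal 0 v := by
    rw [gaussianReal_map_const_mul, mul_zero, mul_one]
    congr 1
    ext
    simp
  rw [← hmap, Measure.map_apply (by fun_prop) measurableSet_Ici]
  congr 1
  ext x
  simp [div_le_iff₀ hsqrt, mul_comm]

theorem gaussianReal_zero_setOf_le_sq {v : ℝ≥0} (hv : v ≠ 0) {d : ℝ} (hd : 0 < d) :
    gaussianReal 0 v {x | d ≤ x ^ 2} = 2 * gaussianReal 0 1 (Set.Ici √(d / v)) := by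
  have hsd : 0 < √d := Real.sqrt_pos.2 hd
  have hdisj : Disjoint (Set.Iic (-√d)) (Set.Ici √d) := Set.Iic_disjoint_Ici.2 (by linarith)
  rw [← Real.sq_sqrt hd.le, setOf_sq_le_sq_eq_Iic_union_Ici hsd.le,
    measure_union hdisj measurableSet_Ici, gaussianReal_zero_Iic_neg, two_mul,
    gaussianReal_zero_Ici_eq_std hv, Real.sq_sqrt hd.le, Real.sqrt_div hd.le]

theorem exp_neg_rateDistortion_add_mul_capacity {σs2 ση2 P d : ℝ} (hσs : 0 < σs2)
    (hση : 0 < ση2) (hP : 0 < P) (hd : 0 < d) (N : ℕ) :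
    exp (-(1 / 2 * log (σs2 / d)) + N * (1 / 2 * log (1 + P / ση2)))
      = √(d / (σs2 * (ση2 / (P + ση2)) ^ N)) := by
  have hratio : 1 + P / ση2 = (ση2 / (P + ση2))⁻¹ := by
    field_simp
    ring
  rw [Real.sqrt_eq_rpow, Real.rpow_def_of_pos (by positivity), hratio, Real.log_inv,
    Real.log_div hd.ne' (by positivity), Real.log_mul hσs.ne' (by positivity), Real.log_pow,
    Real.log_div hσs.ne' hd.ne']
  ring_nf

theorem stmt_16_general (σs2 ση2 P d : ℝ) (hσs : 0 < σs2) (hση : 0 < ση2) (hP : 0 < P)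
    (hd : 0 < d) (N : ℕ)
    (αN : ℝ) (hα : αN = σs2 * (ση2 / (P + ση2)) ^ N) :
    ((gaussianReal 0 αN.toNNReal) {x | d ≤ x ^ 2}).toReal
      ≤ 2 * ((gaussianReal 0 1) (Set.Ici
          (Real.exp (-(1 / 2 * Real.log (σs2 / d))
            + (N : ℝ) * (1 / 2 * Real.log (1 + P / ση2)))))).toReal := by
  have hαpos : 0 < αN := by
    rw [hα]
    positivity
  rw [gaussianReal_zero_setOf_le_sq (Real.toNNReal_pos.2 hαpos).ne' hd,
    exp_neg_rateDistortion_add_mul_capacity hσs hση hP hd, ← hα,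
    Real.coe_toNNReal _ hαpos.le, ENNReal.toReal_mul, ENNReal.toReal_ofNat]

/-- SK iteration excess-distortion bound:
`P(ε_N² ≥ d) ≤ 2 Q(exp(−R(d) + N·C(P)))` with
`α_N = σs²·(ση²/(P+ση²))^N`, `R(d) = (1/2)ln(σs²/d)`, `C(P) = (1/2)ln(1+P/ση²)`. -/
theorem stmt_16 (σs2 ση2 P d : ℝ) (hσs : 0 < σs2) (hση : 0 < ση2) (hP : 0 < P)
    (hd : 0 < d) (hdσ : d < σs2) (N : ℕ)
    (αN : ℝ) (hα : αN = σs2 * (ση2 / (P + ση2)) ^ N) :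
    ((gaussianReal 0 αN.toNNReal) {x | d ≤ x ^ 2}).toReal
      ≤ 2 * ((gaussianReal 0 1) (Set.Ici
          (Real.exp (-(1 / 2 * Real.log (σs2 / d))
            + (N : ℝ) * (1 / 2 * Real.log (1 + P / ση2)))))).toReal :=
  stmt_16_general σs2 ση2 P d hσs hση hP hd N αN hα
end
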